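/- The reduced auxiliary transfer matrix 𝐓(φ,φ′) on C^{m−1}, defined by 𝐓 = Σ_{k=1}^{m−1} (cos²(kη) + cot φ cot φ′ sin²(kη))|k⟩⟨k| + (|sin(kη) sin((k+1)η)|/(2 sin φ sin φ′))(|k⟩⟨k+1| + |k+1⟩⟨k|), satisfies the commutation [𝐓(φ+μ/2, φ′−μ/2), 𝐓(φ+ν/2, φ′−ν/2)] = 0 for m = 3 and all parameters μ, ν. -/
import Mathlib


open Matrix Complex

/-- The reduced auxiliary transfer matrix `𝐓(φ,φ′)` for `m = 3` on `span{|1⟩,|2⟩} ≅ ℂ²`: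
diagonal entries `cos²(kη) + cot φ cot φ′ sin²(kη)` for `k = 1,2`, off-diagonal entries
`|sin(η) sin(2η)|/(2 sin φ sin φ′)`. -/
noncomputable def Tred (η : ℝ) (φ φ' : ℂ) : Matrix (Fin 2) (Fin 2) ℂ :=
  !![(Real.cos η : ℂ) ^ 2
      + (Complex.cos φ / Complex.sin φ) * (Complex.cos φ' / Complex.sin φ') * (Real.sin η : ℂ) ^ 2,
     ((|Real.sin η * Real.sin (2 * η)| : ℝ) : ℂ) / (2 * Complex.sin φ * Complex.sin φ');
     ((|Real.sin η * Real.sin (2 * η)| : ℝ) : ℂ) / (2 * Complex.sin φ * Complex.sin φ'),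
     (Real.cos (2 * η) : ℂ) ^ 2
      + (Complex.cos φ / Complex.sin φ) * (Complex.cos φ' / Complex.sin φ') * (Real.sin (2 * η) : ℂ) ^ 2]

/-- Key trigonometric facts for `η = lπ/3` with `l` coprime to `3`. -/
lemma trig_key (l : ℕ) (hl : Nat.Coprime l 3) (η : ℝ) (hη : η = l * Real.pi / 3) :
    Real.sin η ^ 2 = 3 / 4 ∧ Real.cos η ^ 2 = 1 / 4 ∧
    Real.sin (2 * η) ^ 2 = 3 / 4 ∧ Real.cos (2 * η) ^ 2 = 1 / 4 := by
  have hpi := Real.pi_ne_zero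
  have h3 : Real.sin (3 * η) = 0 := by
    have : 3 * η = l * Real.pi := by rw [hη]; ring
    rw [this, Real.sin_nat_mul_pi]
  have hs0 : Real.sin η ≠ 0 := by
    intro h
    rw [Real.sin_eq_zero_iff] at h
    obtain ⟨n, hn⟩ := h
    rw [hη] at hn
    have h1 : (3 * (n : ℝ)) * Real.pi = (l : ℝ) * Real.pi := by linarith
    have h1' : (3 * (n : ℝ)) = (l : ℝ) := mul_right_cancel₀ hpi h1
    have h2 : (3 * n : ℤ) = (l : ℤ) := by exact_mod_cast h1'
    have h3d : (3 : ℕ) ∣ l := by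
      have : (3 : ℤ) ∣ (l : ℤ) := ⟨n, h2.symm⟩
      exact_mod_cast this
    have := Nat.Coprime.eq_one_of_dvd hl.symm h3d
    norm_num at this
  have htriple := Real.sin_three_mul η
  rw [h3] at htriple
  have hs2 : Real.sin η ^ 2 = 3 / 4 := by
    have hfac : Real.sin η * (3 - 4 * Real.sin η ^ 2) = 0 := by ring_nf; linarith [htriple]
    rcases mul_eq_zero.mp hfac with h | h
    · exact absurd h hs0
    · linarith
  have hc2 : Real.cos η ^ 2 = 1 / 4 := by
    have := Real.sin_sq_add_cos_sq η
    linarith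
  refine ⟨hs2, hc2, ?_, ?_⟩
  · rw [Real.sin_two_mul]; nlinarith
  · rw [Real.cos_two_mul]; nlinarith

lemma abs_key (l : ℕ) (hl : Nat.Coprime l 3) (η : ℝ) (hη : η = l * Real.pi / 3) :
    |Real.sin η * Real.sin (2 * η)| = 3 / 4 := by
  obtain ⟨hs, _, hs2, _⟩ := trig_key l hl η hη
  have h1 : |Real.sin η * Real.sin (2 * η)| ^ 2 = 9 / 16 := by
    rw [_root_.sq_abs]; nlinarith
  have h2 : |Real.sin η * Real.sin (2 * η)| ≥ 0 := abs_nonneg _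
  nlinarith

/-- Matrices of the form `!![a,b;b,a]` commute. -/
lemma comm2 (a b c d : ℂ) : !![a, b; b, a] * !![c, d; d, c] = !![c, d; d, c] * !![a, b; b, a] := by
  ext i j
  fin_cases i <;> fin_cases j <;>
    simp [Matrix.mul_apply, Fin.sum_univ_two] <;> ring

lemma Tred_form (l : ℕ) (hl : Nat.Coprime l 3) (η : ℝ) (hη : η = l * Real.pi / 3) (φ φ' : ℂ) :
    Tred η φ φ' =
      !![(1 / 4 : ℂ) + (Complex.cos φ / Complex.sin φ) * (Complex.cos φ' / Complex.sin φ') * (3 / 4),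
         (3 / 4 : ℂ) / (2 * Complex.sin φ * Complex.sin φ');
         (3 / 4 : ℂ) / (2 * Complex.sin φ * Complex.sin φ'),
         (1 / 4 : ℂ) + (Complex.cos φ / Complex.sin φ) * (Complex.cos φ' / Complex.sin φ') * (3 / 4)] := by
  obtain ⟨hs, hc, hs2, hc2⟩ := trig_key l hl η hη
  have ha := abs_key l hl η hη
  have e1 : ((Real.cos η : ℂ)) ^ 2 = 1 / 4 := by
    rw [show ((Real.cos η : ℂ)) ^ 2 = ((Real.cos η ^ 2 : ℝ) : ℂ) by push_cast; ring, hc]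
    norm_num
  have e2 : ((Real.sin η : ℂ)) ^ 2 = 3 / 4 := by
    rw [show ((Real.sin η : ℂ)) ^ 2 = ((Real.sin η ^ 2 : ℝ) : ℂ) by push_cast; ring, hs]
    norm_num
  have e3 : ((Real.cos (2 * η) : ℂ)) ^ 2 = 1 / 4 := by
    rw [show ((Real.cos (2 * η) : ℂ)) ^ 2 = ((Real.cos (2 * η) ^ 2 : ℝ) : ℂ) by push_cast; ring, hc2]
    norm_num
  have e4 : ((Real.sin (2 * η) : ℂ)) ^ 2 = 3 / 4 := by
    rw [show ((Real.sin (2 * η) : ℂ)) ^ 2 = ((Real.sin (2 * η) ^ 2 : ℝ) : ℂ) by push_cast; ring, hs2]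
    norm_num
  have e5 : ((|Real.sin η * Real.sin (2 * η)| : ℝ) : ℂ) = 3 / 4 := by
    rw [ha]; norm_num
  unfold Tred
  rw [e1, e2, e3, e4, e5]

/-- For `m = 3`, `η = lπ/3` with `l` coprime to `3`, the one-parameter family
`𝐓(φ+μ/2, φ′−μ/2)` (with `φ+φ′` fixed) is commuting. -/
theorem reduced_transfer_commute (l : ℕ) (hl : Nat.Coprime l 3) (η : ℝ)
    (hη : η = l * Real.pi / 3) (φ φ' : ℂ) :
    ∀ μ ν : ℂ,
      Complex.sin (φ + μ / 2) ≠ 0 → Complex.sin (φ' - μ / 2) ≠ 0 →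
      Complex.sin (φ + ν / 2) ≠ 0 → Complex.sin (φ' - ν / 2) ≠ 0 →
      Tred η (φ + μ / 2) (φ' - μ / 2) * Tred η (φ + ν / 2) (φ' - ν / 2)
        = Tred η (φ + ν / 2) (φ' - ν / 2) * Tred η (φ + μ / 2) (φ' - μ / 2) := by
  intro μ ν _ _ _ _
  rw [Tred_form l hl η hη (φ + μ / 2) (φ' - μ / 2),
      Tred_form l hl η hη (φ + ν / 2) (φ' - ν / 2)]
  exact comm2 _ _ _ _
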